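/- arXiv:1502.06695 — 3 statements merged into one kernel-verified Lean document; each statement's English description precedes it below -/
import Mathlib

section
/- Let K ≥ 1 and suppose that in the vector continued fraction algorithm all constant terms a^i[k] are nonzero for 0 ≤ i ≤ L−1 and 0 ≤ k ≤ K−1 (so the recursion f[k+1] = T[k]f[k] is defined up to step K and each f[k] ∈ ℂ[[w]]^L). Let φ := ᵀ(f_1/f_0, …, f_{L−1}/f_0) ∈ ℂ[[w]]^{L−1}. For 1 ≤ k ≤ K define the vector of rational functions ᵀ(ϖ_0, ϖ_1, …, ϖ_{L−1}) := T[0]^{−1}T[1]^{−1}⋯T[k−1]^{−1}·ᵀ(1, 0, …, 0). Then each ϖ_i is regular at w = 0 with ϖ_0(0) ≠ 0, and the kth convergent Π_k := ᵀ(ϖ_1/ϖ_0, …, ϖ_{L−1}/ϖ_0) satisfies φ − Π_k = O(w^k) componentwise (comparing Taylor expansions at w = 0). -/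
/-
Over `ℂ⟦w⟧` the matrix `T[k]⁻¹ = w • M[k]⁻¹` is a polynomial matrix `S[k]` whose columns
`1, …, L-1` are divisible by `w`, so `S[k]` has rank one modulo `w`. Since `f[k] = S[k] f[k+1]`,
the vectors `f` and `ϖ` are the images of `f[k]` and `e₀` under the same product
`S[0] ⋯ S[k-1]`. Peeling off one factor at a time: if `w' ≡ c v (mod w^n)` and `v₀` is a unit,
then `S w' ≡ c' S v (mod w^(n+1))`, because modulo `w` both `S w'` and `S v` are multiples of the
column `S e₀`, and the correction `c'` absorbs that. Starting from `n = 0` this gives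
`f ≡ c ϖ (mod w^k)`, hence `f_i ϖ_0 - f_0 ϖ_i = O(w^k)`, while `ϖ_0(0) ≠ 0` because
`(S v)₀ ≡ S₀₀ v₀ (mod w)`.
-/

noncomputable section

/-- The matrix `M[·]` of the vector continued fraction algorithm, over power series:
`(0, L-1)`-entry `w`, `(i, i-1)`-entry `1`, `(i,i)`-entry `-a^{i-1}/a^i` for `1 ≤ i ≤ L-1`.
One has `T[·] = w⁻¹ · M[·]`. -/
def cfM (L : ℕ) (g : Fin L → PowerSeries ℂ) : Matrix (Fin L) (Fin L) (PowerSeries ℂ) :=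
  Matrix.of fun i j =>
    if (i : ℕ) = 0 then (if (j : ℕ) = L - 1 then PowerSeries.X else 0)
    else if (j : ℕ) + 1 = (i : ℕ) then 1
    else if j = i then
      - PowerSeries.C
          (PowerSeries.constantCoeff (g ⟨(i : ℕ) - 1, lt_of_le_of_lt (Nat.sub_le _ _) i.isLt⟩) /
            PowerSeries.constantCoeff (g i))
    else 0

/-- One step `f ↦ T[·]·f = w⁻¹·(M[·]·f)` of the vector continued fraction algorithm
(the product `M[·]·f` is divisible by `w`, so this shift is division by `w`). -/
def cfStep (L : ℕ) (g : Fin L → PowerSeries ℂ) : Fin L → PowerSeries ℂ :=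
  fun i => PowerSeries.mk fun t =>
    PowerSeries.coeff (t + 1) (∑ j, cfM L g i j * g j)

/-- The iterates `f[k]` of the vector continued fraction algorithm. -/
def cfIter (L : ℕ) (f : Fin L → PowerSeries ℂ) : ℕ → (Fin L → PowerSeries ℂ)
  | 0 => f
  | k + 1 => cfStep L (cfIter L f k)

/-- The matrix `T[·] = w⁻¹ M[·]` as a matrix of rational functions. -/
def cfT (L : ℕ) (g : Fin L → PowerSeries ℂ) : Matrix (Fin L) (Fin L) (RatFunc ℂ) :=
  Matrix.of fun i j =>
    (RatFunc.X)⁻¹ *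
      (if (i : ℕ) = 0 then (if (j : ℕ) = L - 1 then RatFunc.X else 0)
       else if (j : ℕ) + 1 = (i : ℕ) then 1
       else if j = i then
         - RatFunc.C
             (PowerSeries.constantCoeff (g ⟨(i : ℕ) - 1, lt_of_le_of_lt (Nat.sub_le _ _) i.isLt⟩) /
               PowerSeries.constantCoeff (g i))
       else 0)

open Matrix PowerSeries
open scoped LaurentSeries RatFunc

theorem Matrix.mul_eq_smul_one_comm {n R : Type*} [Fintype n] [DecidableEq n] [CommRing R]
    [IsDomain R] {A B : Matrix n n R} {x : R} (hx : x ≠ 0) (h : A * B = x • 1) :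
    B * A = x • 1 := by
  have hdet : A.det * B.det = x ^ Fintype.card n := by
    rw [← det_mul, h, det_smul, det_one, mul_one]
  have hB : B.det ≠ 0 := right_ne_zero_of_mul (hdet ▸ pow_ne_zero _ hx)
  have hzero : B.det • (B * A - x • 1) = 0 := by
    rw [← Matrix.mul_one (B * A - x • 1), ← Matrix.mul_smul, ← mul_adjugate, ← Matrix.mul_assoc,
      Matrix.sub_mul, Matrix.mul_assoc, h, Matrix.mul_smul, Matrix.smul_mul, Matrix.mul_one,
      Matrix.one_mul, sub_self, Matrix.zero_mul]
  ext i j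
  simpa [hB, sub_eq_zero] using congrFun (congrFun hzero i) j

theorem dvd_mul_sub_mul_of_dvd_sub_mul {ι R : Type*} [CommRing R] {v w : ι → R} {y c : R}
    (hw : ∀ i, y ∣ w i - c * v i) (i j : ι) : y ∣ w i * v j - w j * v i := by
  convert dvd_sub (dvd_mul_of_dvd_left (hw i) (v j)) (dvd_mul_of_dvd_left (hw j) (v i)) using 1
  ring

section Proportional

variable {R ι : Type*} [CommRing R] [Fintype ι] [DecidableEq ι] {x : R}
  {S : Matrix ι ι R} {j₀ : ι}

theorem dvd_mulVec_sub_mul (hS : ∀ i j, j ≠ j₀ → x ∣ S i j) (v : ι → R) (i : ι) :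
    x ∣ (S *ᵥ v) i - S i j₀ * v j₀ := by
  rw [mulVec, dotProduct, Fintype.sum_eq_add_sum_compl j₀, add_sub_cancel_left]
  exact Finset.dvd_sum fun j hj =>
    dvd_mul_of_dvd_left (hS i j (Finset.mem_compl.mp hj ∘ Finset.mem_singleton.mpr)) _

theorem exists_dvd_mulVec_sub_mul_mulVec (hS : ∀ i j, j ≠ j₀ → x ∣ S i j) {v w : ι → R}
    (hv : IsUnit (v j₀)) {n : ℕ} {c : R} (hw : ∀ i, x ^ n ∣ w i - c * v i) :
    ∃ c' : R, ∀ i, x ^ (n + 1) ∣ (S *ᵥ w) i - c' * (S *ᵥ v) i := by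
  choose r hr using hw
  obtain ⟨v₀, hv₀⟩ := hv
  refine ⟨c + x ^ n * (r j₀ * ↑v₀⁻¹), fun i => ?_⟩
  have hwr : w = c • v + x ^ n • r := funext fun i => by
    simp only [Pi.add_apply, Pi.smul_apply, smul_eq_mul]; rw [← hr]; ring
  have hr' : r j₀ = (r j₀ * ↑v₀⁻¹) * v j₀ := by rw [← hv₀, mul_assoc, Units.inv_mul, mul_one]
  have key := dvd_mulVec_sub_mul hS (r - (r j₀ * ↑v₀⁻¹) • v) i
  simp only [Pi.sub_apply, Pi.smul_apply, smul_eq_mul, ← hr', sub_self, mul_zero, sub_zero,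
    mulVec_sub, mulVec_smul] at key
  rw [hwr, mulVec_add, mulVec_smul, mulVec_smul, pow_succ]
  convert mul_dvd_mul_left (x ^ n) key using 1
  simp only [Pi.add_apply, Pi.smul_apply, smul_eq_mul]
  ring

end Proportional

section PowerSeries

variable {K : Type*} [Field K]

theorem PowerSeries.X_pow_dvd_mul_inv_sub_mul_inv {n : ℕ} {a b c d : K⟦X⟧}
    (hc : constantCoeff c ≠ 0) (hd : constantCoeff d ≠ 0) (h : X ^ n ∣ a * d - c * b) :
    X ^ n ∣ a * c⁻¹ - b * d⁻¹ := by
  have key : a * c⁻¹ - b * d⁻¹ = (a * d - c * b) * (c⁻¹ * d⁻¹) := by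
    linear_combination (-(a * c⁻¹)) * PowerSeries.mul_inv_cancel d hd +
      (b * d⁻¹) * PowerSeries.mul_inv_cancel c hc
  exact key ▸ dvd_mul_of_dvd_left h _

theorem PowerSeries.coe_inv {g : K⟦X⟧} (hg : constantCoeff g ≠ 0) :
    ((g⁻¹ : K⟦X⟧) : K⸨X⸩) = (g : K⸨X⸩)⁻¹ :=
  eq_inv_of_mul_eq_one_left <| by
    rw [← PowerSeries.coe_mul, PowerSeries.inv_mul_cancel g hg, PowerSeries.coe_one]

theorem PowerSeries.coeff_coe_eq_zero_of_X_pow_dvd {n : ℕ} {g : K⟦X⟧} (hg : X ^ n ∣ g) {t : ℤ}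
    (ht : t < n) : ((g : K⟦X⟧) : K⸨X⸩).coeff t = 0 := by
  rw [coeff_coe]
  split_ifs with h
  · rfl
  · exact X_pow_dvd_iff.mp hg _ (by omega)

end PowerSeries

namespace VectorCF

section Generic

variable {A : Type*} [CommRing A] {L : ℕ}

def mat (φ : ℂ →+* A) (x : A) (u : Fin L → ℂ) : Matrix (Fin L) (Fin L) A :=
  Matrix.of fun i j =>
    if (i : ℕ) = 0 then (if (j : ℕ) = L - 1 then x else 0)
    else if (j : ℕ) + 1 = (i : ℕ) then 1
    else if j = i then - φ (u ⟨(i : ℕ) - 1, lt_of_le_of_lt (Nat.sub_le _ _) i.isLt⟩ / u i)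
    else 0

/-- `x • (mat φ x u)⁻¹`: column `j` solves `mat φ x u *ᵥ s = x • Pi.single j 1`, where row `0`
fixes `s (L-1)` and row `i ≥ 1` then determines `s (i-1)` from `s i`. -/
def scaledInv [NeZero L] (φ : ℂ →+* A) (x : A) (u : Fin L → ℂ) : Matrix (Fin L) (Fin L) A :=
  Matrix.of fun i j =>
    if (j : ℕ) = 0 then φ (u i / u ⟨L - 1, Nat.sub_lt (NeZero.pos L) one_pos⟩)
    else if (i : ℕ) < (j : ℕ) then
      x * φ (u i / u ⟨(j : ℕ) - 1, lt_of_le_of_lt (Nat.sub_le _ _) j.isLt⟩)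
    else 0

variable (φ : ℂ →+* A) (x : A) (u : Fin L → ℂ)

theorem mat_mulVec_zero [NeZero L] (v : Fin L → A) :
    (mat φ x u *ᵥ v) 0 = x * v ⟨L - 1, Nat.sub_lt (NeZero.pos L) one_pos⟩ := by
  rw [mulVec, dotProduct, Finset.sum_eq_single ⟨L - 1, Nat.sub_lt (NeZero.pos L) one_pos⟩]
  · simp [mat]
  · intro d _ hd
    have hd' : (d : ℕ) ≠ L - 1 := fun h => hd (Fin.ext h)
    simp only [mat, of_apply, Fin.val_zero, if_true, if_neg hd', zero_mul]
  · simp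

theorem mat_mulVec_of_val_ne_zero (v : Fin L → A) {i : Fin L} (hi : (i : ℕ) ≠ 0) :
    (mat φ x u *ᵥ v) i = v ⟨(i : ℕ) - 1, lt_of_le_of_lt (Nat.sub_le _ _) i.isLt⟩ -
      φ (u ⟨(i : ℕ) - 1, lt_of_le_of_lt (Nat.sub_le _ _) i.isLt⟩ / u i) * v i := by
  set p : Fin L := ⟨(i : ℕ) - 1, lt_of_le_of_lt (Nat.sub_le _ _) i.isLt⟩ with hp
  have hpi : (p : ℕ) + 1 = i := by simp only [hp]; omega
  have hne : p ≠ i := by rw [Ne, Fin.ext_iff]; omega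
  rw [mulVec, dotProduct, ← Finset.sum_subset (Finset.subset_univ {p, i}), Finset.sum_pair hne]
  · simp only [mat, of_apply, if_neg hi, if_pos hpi, if_neg (show (i : ℕ) + 1 ≠ i by omega),
      if_neg hne, if_true, ← hp]
    ring
  · intro d _ hd
    simp only [Finset.mem_insert, Finset.mem_singleton, not_or] at hd
    have hd' : (d : ℕ) + 1 ≠ i := fun h => hd.1 (Fin.ext (by omega))
    simp only [mat, of_apply, if_neg hi, if_neg hd', if_neg hd.2, zero_mul]

theorem mat_mul_scaledInv [NeZero L] (hu : ∀ i, u i ≠ 0) :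
    mat φ x u * scaledInv φ x u = x • 1 := by
  have hφ : ∀ {a b c : ℂ}, b ≠ 0 → φ (a / b) * φ (b / c) = φ (a / c) := fun hb => by
    rw [← map_mul, div_mul_div_cancel₀ hb]
  ext i j
  change (mat φ x u *ᵥ fun d => scaledInv φ x u d j) i = _
  rcases eq_or_ne (i : ℕ) 0 with hi | hi
  · obtain rfl : i = 0 := Fin.ext hi
    rw [mat_mulVec_zero]
    simp only [scaledInv, of_apply, Matrix.smul_apply, one_apply, smul_eq_mul]
    split_ifs <;> first
      | (simp only [Fin.ext_iff, Fin.val_zero] at *; omega)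
      | simp [hu]
  · rw [mat_mulVec_of_val_ne_zero _ _ _ _ hi]
    simp only [scaledInv, of_apply, Matrix.smul_apply, one_apply, smul_eq_mul]
    split_ifs <;> first
      | (simp only [Fin.ext_iff] at *; omega)
      | (rw [hφ (hu i)]; simp)
      | (rw [mul_left_comm, hφ (hu i)]; simp)
      | (subst_vars; simp [hu])

theorem map_scaledInv [NeZero L] {B : Type*} [CommRing B] (ψ : A →+* B) :
    (scaledInv φ x u).map ψ = scaledInv (ψ.comp φ) (ψ x) u := by
  ext i j
  simp only [scaledInv, map_apply, of_apply, RingHom.coe_comp, Function.comp_apply]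
  split_ifs <;> simp

theorem dvd_scaledInv [NeZero L] (i j : Fin L) (hj : j ≠ 0) :
    x ∣ scaledInv φ x u i j := by
  have hj' : (j : ℕ) ≠ 0 := fun h => hj (Fin.ext h)
  simp only [scaledInv, of_apply, if_neg hj']
  split_ifs
  exacts [dvd_mul_right _ _, dvd_zero _]

end Generic

variable {L : ℕ}

def constCoeffs (g : Fin L → ℂ⟦X⟧) : Fin L → ℂ := fun i => constantCoeff (g i)

theorem cfM_eq (g : Fin L → ℂ⟦X⟧) : cfM L g = mat C X (constCoeffs g) := rfl

theorem cfT_eq (g : Fin L → ℂ⟦X⟧) :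
    cfT L g = (RatFunc.X : RatFunc ℂ)⁻¹ • mat RatFunc.C RatFunc.X (constCoeffs g) := rfl

theorem cfM_mulVec_self [NeZero L] {g : Fin L → ℂ⟦X⟧} (hg : ∀ i, constantCoeff (g i) ≠ 0) :
    cfM L g *ᵥ g = (X : ℂ⟦X⟧) • cfStep L g := by
  funext i
  have hconst : constantCoeff ((cfM L g *ᵥ g) i) = 0 := by
    rcases eq_or_ne (i : ℕ) 0 with hi | hi
    · obtain rfl : i = 0 := Fin.ext hi
      simp [cfM_eq, mat_mulVec_zero]
    · simp [cfM_eq, mat_mulVec_of_val_ne_zero _ _ _ _ hi, constCoeffs, hg i]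
  rw [eq_X_mul_shift_add_const ((cfM L g *ᵥ g) i), hconst, map_zero, add_zero]
  rfl

theorem cfIter_succ' (f : Fin L → ℂ⟦X⟧) (k : ℕ) :
    cfIter L f (k + 1) = cfIter L (cfStep L f) k := by
  induction k with
  | zero => rfl
  | succ k ih => rw [cfIter, ih, cfIter]

theorem constantCoeff_cfIter_cfStep_ne_zero {f : Fin L → ℂ⟦X⟧} {k : ℕ}
    (hf : ∀ t < k + 1, ∀ i, constantCoeff (cfIter L f t i) ≠ 0) :
    ∀ t < k, ∀ i, constantCoeff (cfIter L (cfStep L f) t i) ≠ 0 :=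
  fun t ht => cfIter_succ' f t ▸ hf (t + 1) (by omega)

theorem eq_scaledInv_mulVec_cfStep [NeZero L] {g : Fin L → ℂ⟦X⟧}
    (hg : ∀ i, constantCoeff (g i) ≠ 0) :
    g = scaledInv C X (constCoeffs g) *ᵥ cfStep L g := by
  have hSM : scaledInv C X (constCoeffs g) * cfM L g = X • 1 :=
    Matrix.mul_eq_smul_one_comm X_ne_zero (mat_mul_scaledInv C X (constCoeffs g) hg)
  apply smul_right_injective (Fin L → ℂ⟦X⟧) (X_ne_zero (R := ℂ))
  change X • g = X • (scaledInv C X (constCoeffs g) *ᵥ cfStep L g)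
  rw [← mulVec_smul, ← cfM_mulVec_self hg, mulVec_mulVec, hSM, smul_mulVec, one_mulVec]

theorem inv_cfT [NeZero L] {g : Fin L → ℂ⟦X⟧} (hg : ∀ i, constantCoeff (g i) ≠ 0) :
    (cfT L g)⁻¹ = scaledInv RatFunc.C RatFunc.X (constCoeffs g) := by
  apply inv_eq_right_inv
  rw [cfT_eq, Matrix.smul_mul, mat_mul_scaledInv RatFunc.C RatFunc.X (constCoeffs g) hg, smul_smul,
    inv_mul_cancel₀ RatFunc.X_ne_zero, one_smul]

theorem map_scaledInv_ratFunc [NeZero L] (u : Fin L → ℂ) :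
    (scaledInv RatFunc.C RatFunc.X u).map (algebraMap (RatFunc ℂ) ℂ⸨X⸩) =
      (scaledInv C X u).map (HahnSeries.ofPowerSeries ℤ ℂ) := by
  have hC : (algebraMap (RatFunc ℂ) ℂ⸨X⸩).comp RatFunc.C =
      (HahnSeries.ofPowerSeries ℤ ℂ).comp C := by
    ext c
    simp [← RatFunc.algebraMap_C, ← Polynomial.coe_C, RatFunc.coe_coe]
  rw [map_scaledInv, map_scaledInv, hC, RatFunc.coe_X, HahnSeries.ofPowerSeries_X]

/-- The vector `ϖ` of the `k`th convergent, computed in `ℂ⟦X⟧` by peeling off the factor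
`T[0]⁻¹` (see `coe_prod_inv_cfT_mulVec`). -/
def cfConvergent [NeZero L] : (Fin L → ℂ⟦X⟧) → ℕ → Fin L → ℂ⟦X⟧
  | _, 0 => fun i => if i = 0 then 1 else 0
  | g, k + 1 => scaledInv C X (constCoeffs g) *ᵥ cfConvergent (cfStep L g) k

theorem coe_prod_inv_cfT_mulVec [NeZero L] (f : Fin L → ℂ⟦X⟧) (k : ℕ)
    (hf : ∀ t < k, ∀ i, constantCoeff (cfIter L f t i) ≠ 0) (i : Fin L) :
    algebraMap (RatFunc ℂ) ℂ⸨X⸩ ((((List.range k).map fun t => (cfT L (cfIter L f t))⁻¹).prod *ᵥ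
        fun i => if i = 0 then 1 else 0) i) = ((cfConvergent f k i : ℂ⟦X⟧) : ℂ⸨X⸩) := by
  induction k generalizing f i with
  | zero => simp [cfConvergent, apply_ite (algebraMap (RatFunc ℂ) ℂ⸨X⸩)]
  | succ k ih =>
    have hf' := constantCoeff_cfIter_cfStep_ne_zero hf
    have hmap : (fun t => (cfT L (cfIter L f t))⁻¹) ∘ Nat.succ =
        fun t => (cfT L (cfIter L (cfStep L f) t))⁻¹ := by
      funext t; simp only [Function.comp_apply, ← cfIter_succ']
    rw [List.range_succ_eq_map, List.map_cons, List.map_map, hmap, List.prod_cons,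
      ← mulVec_mulVec, RingHom.map_mulVec, inv_cfT (hf 0 k.succ_pos), map_scaledInv_ratFunc]
    have hv : algebraMap (RatFunc ℂ) ℂ⸨X⸩ ∘ (((List.range k).map fun t =>
        (cfT L (cfIter L (cfStep L f) t))⁻¹).prod *ᵥ fun i => if i = 0 then 1 else 0) =
        HahnSeries.ofPowerSeries ℤ ℂ ∘ cfConvergent (cfStep L f) k :=
      funext (ih (cfStep L f) hf')
    rw [hv, ← RingHom.map_mulVec]
    rfl

theorem isUnit_cfConvergent_zero [NeZero L] (f : Fin L → ℂ⟦X⟧) (k : ℕ)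
    (hf : ∀ t < k, ∀ i, constantCoeff (cfIter L f t i) ≠ 0) :
    IsUnit (cfConvergent f k 0) := by
  induction k generalizing f with
  | zero => simp [cfConvergent]
  | succ k ih =>
    have hf' := constantCoeff_cfIter_cfStep_ne_zero hf
    have hmod := dvd_mulVec_sub_mul (dvd_scaledInv C X (constCoeffs f))
      (cfConvergent (cfStep L f) k) 0
    rw [X_dvd_iff, map_sub, sub_eq_zero] at hmod
    rw [isUnit_iff_constantCoeff, cfConvergent, hmod, map_mul]
    have hf0 : ∀ i, constantCoeff (f i) ≠ 0 := hf 0 k.succ_pos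
    refine IsUnit.mul ?_ (isUnit_iff_constantCoeff.mp (ih _ hf'))
    simpa [scaledInv, constCoeffs] using div_ne_zero (hf0 0) (hf0 _)

theorem exists_X_pow_dvd_sub_mul_cfConvergent [NeZero L] (f : Fin L → ℂ⟦X⟧) (k : ℕ)
    (hf : ∀ t < k, ∀ i, constantCoeff (cfIter L f t i) ≠ 0) :
    ∃ c : ℂ⟦X⟧, ∀ i, X ^ k ∣ f i - c * cfConvergent f k i := by
  induction k generalizing f with
  | zero => exact ⟨0, by simp⟩
  | succ k ih =>
    have hf' := constantCoeff_cfIter_cfStep_ne_zero hf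
    obtain ⟨c, hc⟩ := ih (cfStep L f) hf'
    obtain ⟨c', hc'⟩ := exists_dvd_mulVec_sub_mul_mulVec
      (dvd_scaledInv C X (constCoeffs f)) (isUnit_cfConvergent_zero _ k hf') hc
    have hf0 : ∀ i, constantCoeff (f i) ≠ 0 := hf 0 k.succ_pos
    rw [← eq_scaledInv_mulVec_cfStep hf0] at hc'
    exact ⟨c', hc'⟩

end VectorCF

theorem cf_convergents_general (L : ℕ) [NeZero L]
    (f : Fin L → PowerSeries ℂ) (hf0 : PowerSeries.constantCoeff (f 0) ≠ 0)
    (K : ℕ)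
    (ha : ∀ k < K, ∀ i : Fin L, PowerSeries.constantCoeff (cfIter L f k i) ≠ 0)
    (k : ℕ) (hkK : k ≤ K) :
    let ϖ : Fin L → RatFunc ℂ :=
      Matrix.mulVec (((List.range k).map fun t => (cfT L (cfIter L f t))⁻¹).prod)
        (fun i => if i = 0 then 1 else 0)
    (∀ i : Fin L, ∀ t : ℤ, t < 0 → ((ϖ i : LaurentSeries ℂ)).coeff t = 0) ∧
    ((ϖ 0 : LaurentSeries ℂ)).coeff 0 ≠ 0 ∧
    (∀ i : Fin L, 1 ≤ (i : ℕ) → ∀ t : ℤ, t < (k : ℤ) →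
      (((HahnSeries.ofPowerSeries ℤ ℂ) (f i * (f 0)⁻¹) : LaurentSeries ℂ)
          - ((ϖ i / ϖ 0 : RatFunc ℂ) : LaurentSeries ℂ)).coeff t = 0) := by
  intro ϖ
  have hf : ∀ t < k, ∀ i, constantCoeff (cfIter L f t i) ≠ 0 := fun t ht => ha t (by omega)
  set P := VectorCF.cfConvergent f k
  have hϖ : ∀ i, (ϖ i : ℂ⸨X⸩) = (P i : ℂ⸨X⸩) := VectorCF.coe_prod_inv_cfT_mulVec f k hf
  have hP0 : constantCoeff (P 0) ≠ 0 :=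
    (isUnit_iff_constantCoeff.mp (VectorCF.isUnit_cfConvergent_zero f k hf)).ne_zero
  obtain ⟨c, hc⟩ := VectorCF.exists_X_pow_dvd_sub_mul_cfConvergent f k hf
  refine ⟨fun i t ht => by rw [hϖ, coeff_coe, if_pos ht], by simpa [hϖ, coeff_coe] using hP0,
    fun i _ t ht => ?_⟩
  have hquot : ((ϖ i / ϖ 0 : RatFunc ℂ) : ℂ⸨X⸩) = ((P i * (P 0)⁻¹ : ℂ⟦X⟧) : ℂ⸨X⸩) := by
    rw [map_div₀, hϖ, hϖ, coe_mul, coe_inv hP0, div_eq_mul_inv]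
  rw [hquot, ← map_sub]
  exact coeff_coe_eq_zero_of_X_pow_dvd
    (X_pow_dvd_mul_inv_sub_mul_inv hf0 hP0 (dvd_mul_sub_mul_of_dvd_sub_mul hc i 0)) ht

/-- The `k`th convergent of the vector continued fraction approximates
`φ = ᵀ(f_1/f_0, …, f_{L-1}/f_0)` to order `w^k`. -/
theorem cf_convergents (L : ℕ) (hL : 2 ≤ L) [NeZero L]
    (f : Fin L → PowerSeries ℂ) (hf0 : PowerSeries.constantCoeff (f 0) ≠ 0)
    (K : ℕ) (hK : 1 ≤ K)
    (ha : ∀ k < K, ∀ i : Fin L, PowerSeries.constantCoeff (cfIter L f k i) ≠ 0)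
    (k : ℕ) (hk1 : 1 ≤ k) (hkK : k ≤ K) :
    let ϖ : Fin L → RatFunc ℂ :=
      Matrix.mulVec (((List.range k).map fun t => (cfT L (cfIter L f t))⁻¹).prod)
        (fun i => if i = 0 then 1 else 0)
    (∀ i : Fin L, ∀ t : ℤ, t < 0 → ((ϖ i : LaurentSeries ℂ)).coeff t = 0) ∧
    ((ϖ 0 : LaurentSeries ℂ)).coeff 0 ≠ 0 ∧
    (∀ i : Fin L, 1 ≤ (i : ℕ) → ∀ t : ℤ, t < (k : ℤ) →
      (((HahnSeries.ofPowerSeries ℤ ℂ) (f i * (f 0)⁻¹) : LaurentSeries ℂ)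
          - ((ϖ i / ϖ 0 : RatFunc ℂ) : LaurentSeries ℂ)).coeff t = 0) :=
  cf_convergents_general L f hf0 K ha k hkK
end
end

section
/- Suppose that in the vector continued fraction algorithm all constant terms a^i[k] are nonzero for 0 ≤ i ≤ L−1 and 0 ≤ k ≤ L−1. Then the matrix 𝒬(w) := w^L·T[L−1]·T[L−2]⋯T[1]·T[0] is an L×L matrix of polynomials in w such that: each diagonal entry 𝒬_{ii} is a monic polynomial of degree 1; each strictly upper triangular entry 𝒬_{ij} (i < j) is of the form c·w with c ∈ ℂ; each strictly lower triangular entry 𝒬_{ij} (i > j) is a constant; and 𝒬(w)·f = O(w^L) componentwise. In particular, the rows of 𝒬(w) constitute a solution of the Hermite–Padé approximation problem for (f_0, …, f_{L−1}) with n = 1. -/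
noncomputable section

/-!
Write `M[k] = Z - D[k]`, where `Z` is the cyclic shift with `w` in its corner (so `Z^L = w`) and
`D[k]` is diagonal. Left multiplication by `Z` moves every diagonal of a matrix down by one (the
last row wrapping around to the first, picking up a factor `w`), while `D[k]` keeps each diagonal
in place. Hence the entries of `M[k-1]⋯M[0]` are `α + β w`, with `α` living on the diagonals
`0 ≤ i - j ≤ k` and `β` on the diagonals `i - j ≤ k - L`, both equal to `1` on the outermost one.
At `k = L` this is the claimed shape. Independently, every entry of `M[k]·f[k]` has vanishing
constant term, so `M[k]·f[k] = w·f[k+1]` and `𝒬·f = w^L·f[L]`.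
-/

open PowerSeries Matrix

section

variable {n : ℕ}

theorem cfM_mulVec_zero (g v : Fin (n + 1) → ℂ⟦X⟧) :
    (cfM (n + 1) g *ᵥ v) 0 = X * v (Fin.last n) := by
  rw [mulVec, dotProduct, Finset.sum_eq_single (Fin.last n)]
  · simp [cfM]
  · intro m _ hm
    have hm : (m : ℕ) ≠ n := by simpa using Fin.val_ne_of_ne hm
    simp [cfM, hm]
  · simp

theorem cfM_mulVec_succ (g v : Fin (n + 1) → ℂ⟦X⟧) (i : Fin n) :
    (cfM (n + 1) g *ᵥ v) i.succ =
      v i.castSucc - C (constantCoeff (g i.castSucc) / constantCoeff (g i.succ)) * v i.succ := by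
  rw [mulVec, dotProduct, Fintype.sum_eq_add i.castSucc i.succ Fin.castSucc_lt_succ.ne]
  · simp [cfM, sub_eq_add_neg, ← Fin.castSucc_mk]
  · rintro m ⟨h1, h2⟩
    have h1 : (m : ℕ) ≠ i := by simpa using Fin.val_ne_of_ne h1
    simp [cfM, h1, h2]

theorem cfM_mulVec_self (g : Fin (n + 1) → ℂ⟦X⟧) (hg : ∀ i, constantCoeff (g i) ≠ 0) :
    cfM (n + 1) g *ᵥ g = (X : ℂ⟦X⟧) • cfStep (n + 1) g := by
  funext i
  have hconst : constantCoeff ((cfM (n + 1) g *ᵥ g) i) = 0 := by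
    cases i using Fin.cases with
    | zero => simp [cfM_mulVec_zero]
    | succ i => simp [cfM_mulVec_succ, div_mul_cancel₀ _ (hg _)]
  rw [eq_X_mul_shift_add_const ((cfM (n + 1) g *ᵥ g) i), hconst, map_zero, add_zero]
  rfl

def cfMProd (L : ℕ) (g : ℕ → Fin L → ℂ⟦X⟧) (k : ℕ) : Matrix (Fin L) (Fin L) ℂ⟦X⟧ :=
  ((List.range k).reverse.map fun t => cfM L (g t)).prod

theorem cfMProd_zero (L : ℕ) (g : ℕ → Fin L → ℂ⟦X⟧) : cfMProd L g 0 = 1 := rfl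

theorem cfMProd_succ (L : ℕ) (g : ℕ → Fin L → ℂ⟦X⟧) (k : ℕ) :
    cfMProd L g (k + 1) = cfM L (g k) * cfMProd L g k := by
  simp [cfMProd, List.range_succ]

theorem cfMProd_cfIter_mulVec (f : Fin (n + 1) → ℂ⟦X⟧) {k : ℕ}
    (ha : ∀ t < k, ∀ i, constantCoeff (cfIter (n + 1) f t i) ≠ 0) :
    cfMProd (n + 1) (cfIter (n + 1) f) k *ᵥ f = (X : ℂ⟦X⟧) ^ k • cfIter (n + 1) f k := by
  induction k with
  | zero => simp [cfMProd_zero, cfIter]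
  | succ k ih =>
    rw [cfMProd_succ, ← mulVec_mulVec, ih fun t ht => ha t (by omega), mulVec_smul,
      cfM_mulVec_self _ (ha k (by omega)), smul_smul, ← pow_succ]
    rfl

/-- The shape of `M[k-1]⋯M[0]` described above, for `L = n + 1`. -/
def IsBanded (n k : ℕ) (P : Matrix (Fin (n + 1)) (Fin (n + 1)) ℂ⟦X⟧) : Prop :=
  ∀ i j : Fin (n + 1), ∃ α β : ℂ, P i j = C α + C β * X ∧
    ((i : ℤ) - j < 0 ∨ k < (i : ℤ) - j → α = 0) ∧ ((i : ℤ) - j = k → α = 1) ∧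
    ((k : ℤ) - (n + 1) < (i : ℤ) - j → β = 0) ∧ ((i : ℤ) - j = (k : ℤ) - (n + 1) → β = 1)

theorem isBanded_one : IsBanded n 0 1 := by
  intro i j
  by_cases hij : i = j
  · refine ⟨1, 0, by simp [hij, one_apply], fun h => by simp [hij] at h, fun _ => rfl, fun _ => rfl,
      fun h => by simp [hij] at h; omega⟩
  · have hne := Fin.val_ne_of_ne hij
    exact ⟨0, 0, by simp [hij], fun _ => rfl, fun h => by omega, fun _ => rfl, fun h => by omega⟩

theorem IsBanded.cfM_mul {k : ℕ} {P : Matrix (Fin (n + 1)) (Fin (n + 1)) ℂ⟦X⟧}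
    (hP : IsBanded n k P) (hk : k ≤ n) (g : Fin (n + 1) → ℂ⟦X⟧) :
    IsBanded n (k + 1) (cfM (n + 1) g * P) := by
  intro i j
  have hmul (i : Fin (n + 1)) : (cfM (n + 1) g * P) i j = (cfM (n + 1) g *ᵥ fun m => P m j) i :=
    rfl
  cases i using Fin.cases with
  | zero =>
    obtain ⟨α, β, hPα, hα0, hα1, hβ0, -⟩ := hP (Fin.last n) j
    have hβ : β = 0 := hβ0 (by simp; omega)
    refine ⟨0, α, ?_, fun _ => rfl, fun h => ?_, fun h => hα0 ?_, fun h => hα1 ?_⟩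
    · simp [hmul, cfM_mulVec_zero, hPα, hβ, mul_comm]
    all_goals simp at h ⊢; omega
  | succ i =>
    obtain ⟨α₁, β₁, hP₁, hα₁0, hα₁1, hβ₁0, hβ₁1⟩ := hP i.castSucc j
    obtain ⟨α₂, β₂, hP₂, hα₂0, hα₂1, hβ₂0, hβ₂1⟩ := hP i.succ j
    set a := constantCoeff (g i.castSucc) / constantCoeff (g i.succ)
    have hd : ((i.succ : ℕ) : ℤ) = (i.castSucc : ℕ) + 1 := by simp
    refine ⟨α₁ - a * α₂, β₁ - a * β₂, ?_, fun h => ?_, fun h => ?_, fun h => ?_, fun h => ?_⟩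
    · rw [hmul, cfM_mulVec_succ, hP₁, hP₂, map_sub, map_sub, map_mul, map_mul]
      ring
    · rw [hα₁0 (by omega), hα₂0 (by omega)]; ring
    · rw [hα₁1 (by omega), hα₂0 (by omega)]; ring
    · rw [hβ₁0 (by omega), hβ₂0 (by omega)]; ring
    · rw [hβ₁1 (by omega), hβ₂0 (by omega)]; ring

theorem isBanded_cfMProd (g : ℕ → Fin (n + 1) → ℂ⟦X⟧) {k : ℕ} (hk : k ≤ n + 1) :
    IsBanded n k (cfMProd (n + 1) g k) := by
  induction k with
  | zero => exact isBanded_one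
  | succ k ih =>
    rw [cfMProd_succ]
    exact (ih (by omega)).cfM_mul (by omega) _

variable {P : Matrix (Fin (n + 1)) (Fin (n + 1)) ℂ⟦X⟧}

theorem IsBanded.apply_self (hP : IsBanded n (n + 1) P) (i : Fin (n + 1)) :
    ∃ c : ℂ, P i i = C c + X := by
  obtain ⟨α, β, hPα, -, -, -, hβ⟩ := hP i i
  exact ⟨α, by rw [hPα, hβ (by push_cast; ring), map_one, one_mul]⟩

theorem IsBanded.apply_of_lt (hP : IsBanded n (n + 1) P) {i j : Fin (n + 1)}
    (hij : (i : ℕ) < j) :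
    ∃ c : ℂ, P i j = C c * X := by
  obtain ⟨α, β, hPα, hα, -⟩ := hP i j
  exact ⟨β, by rw [hPα, hα (Or.inl (by omega)), map_zero, zero_add]⟩

theorem IsBanded.apply_of_gt (hP : IsBanded n (n + 1) P) {i j : Fin (n + 1)}
    (hji : (j : ℕ) < i) :
    ∃ c : ℂ, P i j = C c := by
  obtain ⟨α, β, hPα, -, -, hβ, -⟩ := hP i j
  exact ⟨α, by rw [hPα, hβ (by push_cast; omega), map_zero, zero_mul, add_zero]⟩

end

theorem cf_gives_HP_general (L : ℕ) (f : Fin L → PowerSeries ℂ)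
    (ha : ∀ k < L, ∀ i : Fin L, PowerSeries.constantCoeff (cfIter L f k i) ≠ 0) :
    let Qm : Matrix (Fin L) (Fin L) (PowerSeries ℂ) :=
      (((List.range L).reverse.map fun t => cfM L (cfIter L f t)).prod)
    (∀ i : Fin L, ∃ c : ℂ, Qm i i = PowerSeries.C c + PowerSeries.X) ∧
    (∀ i j : Fin L, (i : ℕ) < (j : ℕ) → ∃ c : ℂ, Qm i j = PowerSeries.C c * PowerSeries.X) ∧
    (∀ i j : Fin L, (j : ℕ) < (i : ℕ) → ∃ c : ℂ, Qm i j = PowerSeries.C c) ∧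
    (∀ i : Fin L, ∀ t < L, PowerSeries.coeff t (∑ j, Qm i j * f j) = 0) := by
  intro Qm
  cases L with
  | zero => exact ⟨fun i => i.elim0, fun i => i.elim0, fun i => i.elim0, fun i => i.elim0⟩
  | succ n =>
    have hQ : IsBanded n (n + 1) Qm := isBanded_cfMProd _ le_rfl
    refine ⟨hQ.apply_self, fun _ _ => hQ.apply_of_lt, fun _ _ => hQ.apply_of_gt, fun i t ht => ?_⟩
    have hQf : ∑ j, Qm i j * f j = X ^ (n + 1) * cfIter (n + 1) f (n + 1) i :=
      congr_fun (cfMProd_cfIter_mulVec f ha) i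
    rw [hQf, coeff_X_pow_mul', if_neg (by omega)]

/-- The matrix `𝒬(w) = w^L·T[L-1]⋯T[1]T[0] = M[L-1]⋯M[1]M[0]` is a polynomial matrix
with monic linear diagonal, `w`-multiple strictly upper part, constant strictly lower part,
and `𝒬·f = O(w^L)`; its rows solve the Hermite–Padé problem with `n = 1`. -/
theorem cf_gives_HP (L : ℕ) (hL : 2 ≤ L) [NeZero L]
    (f : Fin L → PowerSeries ℂ) (hf0 : PowerSeries.constantCoeff (f 0) ≠ 0)
    (ha : ∀ k < L, ∀ i : Fin L, PowerSeries.constantCoeff (cfIter L f k i) ≠ 0) :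
    let Qm : Matrix (Fin L) (Fin L) (PowerSeries ℂ) :=
      (((List.range L).reverse.map fun t => cfM L (cfIter L f t)).prod)
    (∀ i : Fin L, ∃ c : ℂ, Qm i i = PowerSeries.C c + PowerSeries.X) ∧
    (∀ i j : Fin L, (i : ℕ) < (j : ℕ) → ∃ c : ℂ, Qm i j = PowerSeries.C c * PowerSeries.X) ∧
    (∀ i j : Fin L, (j : ℕ) < (i : ℕ) → ∃ c : ℂ, Qm i j = PowerSeries.C c) ∧
    (∀ i : Fin L, ∀ t < L, PowerSeries.coeff t (∑ j, Qm i j * f j) = 0) :=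
  cf_gives_HP_general L f ha
end
end

section
/- Let L ≥ 2, n ≥ 1, m = n(L−1), and let {h^k_j}_{j≥0} ⊂ ℂ (0 ≤ k ≤ L−1) be sequences satisfying the contiguity relation h^1_j + h^2_j + ⋯ + h^{L−1}_j = h^0_j − h^0_{j+1} for all j ≥ 0. Set f_l(w) := Σ_{j≥0} h^l_j w^j for 1 ≤ l ≤ L−1. Define P_0(w) := det of the (m+1)×(m+1) matrix with first row (1, w, …, w^m) and remaining rows the stacked blocks A^1_m(n,m+1), …, A^{L−1}_m(n,m+1), and P_l(w) := [f_l·P_0]_0^{m−1} for 1 ≤ l ≤ L−1. Then h^0_0·P_0(1) − Σ_{l=1}^{L−1} P_l(1) = det of the (m+1)×(m+1) matrix with first row (h^0_m, h^0_{m−1}, …, h^0_1, h^0_0) and remaining rows the stacked blocks A^1_m(n,m+1), …, A^{L−1}_m(n,m+1). -/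
/-!
Expanding a determinant along its first row `v` gives `∑ c, v c * E c`, where the cofactors
`E c` only depend on the Toeplitz block rows; for `P_0` they are its coefficients, so `P_0` has
degree at most `m`. By the contiguity relation, `∑ l, f_l = ∑ j, (h⁰_j - h⁰_{j+1}) w^j`, so the
coefficients of `(∑ l, f_l) P_0` in degrees `< m` add up to the telescoping sum
`∑_{c < m} (h⁰_0 - h⁰_{m-c}) E c`. Hence the left-hand side is `∑_{c ≤ m} h⁰_{m-c} E c`, the
first-row expansion of the right-hand determinant.
-/

noncomputable section

/-- A sequence `ℕ → ℂ` extended by `0` to negative indices. -/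
def hz (h : ℕ → ℕ → ℂ) (k : ℕ) : ℤ → ℂ := fun j => if 0 ≤ j then h k j.toNat else 0

/-- `P_0^{(0)}(w)`: the determinant of the `(m+1) × (m+1)` matrix with first row
`(1, w, …, w^m)` and remaining rows the stacked blocks `A^1_m(n,m+1), …, A^{L-1}_m(n,m+1)`,
where `m = n(L-1)`. -/
def P00 (L n : ℕ) (a : ℕ → ℤ → ℂ) : Polynomial ℂ :=
  Matrix.det (Matrix.of fun r c : Fin (n * (L - 1) + 1) =>
    if (r : ℕ) = 0 then Polynomial.X ^ (c : ℕ)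
    else Polynomial.C (a (((r : ℕ) - 1) / n + 1)
      (((n * (L - 1) : ℕ) : ℤ) + (((((r : ℕ) - 1) % n : ℕ)) : ℤ) - ((c : ℕ) : ℤ))))

open Polynomial Finset

section
variable {R : Type*} [CommRing R]

theorem eval_one_trunc (G : PowerSeries R) (m : ℕ) :
    (PowerSeries.trunc m G).eval 1 = ∑ j ∈ range m, PowerSeries.coeff j G := by
  simpa using PowerSeries.eval₂_trunc_eq_sum_range (1 : R) (RingHom.id R) m G

theorem sum_eval_one_trunc {ι : Type*} (s : Finset ι) (G : ι → PowerSeries R) (m : ℕ) :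
    ∑ l ∈ s, (PowerSeries.trunc m (G l)).eval 1 = (PowerSeries.trunc m (∑ l ∈ s, G l)).eval 1 := by
  simp only [eval_one_trunc, map_sum (PowerSeries.coeff _)]
  exact sum_comm

theorem mul_eval_one_sub_eval_one_trunc (q : ℕ → R) (p : R[X]) {m : ℕ} (hp : p.natDegree ≤ m) :
    q 0 * p.eval 1 - (PowerSeries.trunc m
      (PowerSeries.mk (fun j => q j - q (j + 1)) * (p : PowerSeries R))).eval 1 =
      ∑ i ∈ range (m + 1), q (m - i) * p.coeff i := by
  have hpartial : (PowerSeries.trunc m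
      (PowerSeries.mk (fun j => q j - q (j + 1)) * (p : PowerSeries R))).eval 1 =
      ∑ i ∈ range m, (q 0 - q (m - i)) * p.coeff i := calc
    _ = ∑ j ∈ range m, ∑ i ∈ range (j + 1), (q (j - i) - q (j - i + 1)) * p.coeff i := by
      rw [eval_one_trunc, mul_comm]
      refine sum_congr rfl fun j _ => ?_
      rw [PowerSeries.coeff_mul, Nat.sum_antidiagonal_eq_sum_range_succ_mk]
      simp only [Polynomial.coeff_coe, PowerSeries.coeff_mk, mul_comm]
    _ = ∑ i ∈ range m, ∑ k ∈ range (m - i), (q k - q (k + 1)) * p.coeff i :=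
      sum_range_diag_flip m fun i k => (q k - q (k + 1)) * p.coeff i
    _ = _ := by simp only [← sum_mul, sum_range_sub']
  rw [eval_eq_sum_range' (Nat.lt_succ_of_le hp), hpartial, sum_range_succ, sum_range_succ,
    Nat.sub_self, mul_add, mul_sum]
  simp only [one_pow, mul_one, sub_mul, sum_sub_distrib]
  ring

variable {N : ℕ}

def firstRowCofactor (f : Fin (N + 1) → Fin (N + 1) → R) (j : Fin (N + 1)) : R :=
  (-1) ^ (j : ℕ) * (Matrix.of fun r c : Fin N => f r.succ (j.succAbove c)).det

theorem det_eq_sum_mul_firstRowCofactor (v : Fin (N + 1) → R)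
    (f : Fin (N + 1) → Fin (N + 1) → R) :
    (Matrix.of fun r c : Fin (N + 1) => if (r : ℕ) = 0 then v c else f r c).det =
      ∑ j, v j * firstRowCofactor f j := by
  rw [Matrix.det_succ_row_zero]
  refine sum_congr rfl fun j _ => ?_
  simp only [Fin.val_eq_zero_iff, Matrix.of_apply, Matrix.submatrix, Fin.succ_ne_zero,
    if_true, if_false, firstRowCofactor]
  ring

theorem firstRowCofactor_map {S : Type*} [CommRing S] (φ : R →+* S)
    (f : Fin (N + 1) → Fin (N + 1) → R) (j : Fin (N + 1)) :
    firstRowCofactor (fun r c => φ (f r c)) j = φ (firstRowCofactor f j) := by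
  simp only [firstRowCofactor, map_mul, map_pow, map_neg, map_one, RingHom.map_det,
    RingHom.mapMatrix_apply]
  rfl

end

/-- Rows `1, …, m` of both matrices of the theorem: the stacked Toeplitz blocks
`A^k_m(n, m+1)`. Row `0` is never read. -/
def blockRows (L n : ℕ) (a : ℕ → ℤ → ℂ) (r c : Fin (n * (L - 1) + 1)) : ℂ :=
  a (((r : ℕ) - 1) / n + 1)
    (((n * (L - 1) : ℕ) : ℤ) + (((((r : ℕ) - 1) % n : ℕ)) : ℤ) - ((c : ℕ) : ℤ))

theorem P00_eq_sum_C_mul_X_pow (L n : ℕ) (a : ℕ → ℤ → ℂ) :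
    P00 L n a = ∑ j, C (firstRowCofactor (blockRows L n a) j) * X ^ (j : ℕ) := by
  rw [P00, det_eq_sum_mul_firstRowCofactor]
  refine sum_congr rfl fun j _ => ?_
  rw [mul_comm, ← firstRowCofactor_map]
  rfl

theorem coeff_P00 (L n : ℕ) (a : ℕ → ℤ → ℂ) (j : Fin (n * (L - 1) + 1)) :
    (P00 L n a).coeff j = firstRowCofactor (blockRows L n a) j := by
  simp [P00_eq_sum_C_mul_X_pow, Fin.val_inj]

theorem natDegree_P00_le (L n : ℕ) (a : ℕ → ℤ → ℂ) : (P00 L n a).natDegree ≤ n * (L - 1) := by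
  rw [P00_eq_sum_C_mul_X_pow]
  exact natDegree_sum_le_of_forall_le _ _ fun j _ =>
    (natDegree_C_mul_X_pow_le _ _).trans (Nat.lt_succ_iff.mp j.isLt)

theorem eval_one_identity_zero_general (L n : ℕ)
    (h : ℕ → ℕ → ℂ)
    (hcont : ∀ j : ℕ, ∑ k ∈ Finset.Ico 1 L, h k j = h 0 j - h 0 (j + 1)) :
    h 0 0 * Polynomial.eval 1 (P00 L n (hz h)) -
        ∑ l ∈ Finset.Ico 1 L, Polynomial.eval 1
          (PowerSeries.trunc (n * (L - 1))
            ((PowerSeries.mk fun j => h l j) *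
              ((P00 L n (hz h) : Polynomial ℂ) : PowerSeries ℂ))) =
      Matrix.det (Matrix.of fun r c : Fin (n * (L - 1) + 1) =>
        if (r : ℕ) = 0 then hz h 0 (((n * (L - 1) : ℕ) : ℤ) - ((c : ℕ) : ℤ))
        else hz h (((r : ℕ) - 1) / n + 1)
          (((n * (L - 1) : ℕ) : ℤ) + (((((r : ℕ) - 1) % n : ℕ)) : ℤ) - ((c : ℕ) : ℤ))) := by
  have hseries : ∑ l ∈ Ico 1 L, (PowerSeries.mk fun j => h l j) =
      PowerSeries.mk fun j => h 0 j - h 0 (j + 1) := by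
    ext j
    simp [hcont]
  rw [sum_eval_one_trunc, ← sum_mul, hseries,
    mul_eval_one_sub_eval_one_trunc _ _ (natDegree_P00_le L n (hz h)),
    det_eq_sum_mul_firstRowCofactor, ← Fin.sum_univ_eq_sum_range]
  refine sum_congr rfl fun j _ => ?_
  rw [coeff_P00]
  congr 1
  rw [hz, if_pos (by omega)]
  congr
  omega

/-- Evaluation at `w = 1` of the simultaneous Padé polynomials (`j = 0` case),
via the contiguity relation `h^1_j + ⋯ + h^{L-1}_j = h^0_j - h^0_{j+1}`. -/
theorem eval_one_identity_zero (L n : ℕ) (hL : 2 ≤ L) (hn : 0 < n)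
    (h : ℕ → ℕ → ℂ)
    (hcont : ∀ j : ℕ, ∑ k ∈ Finset.Ico 1 L, h k j = h 0 j - h 0 (j + 1)) :
    h 0 0 * Polynomial.eval 1 (P00 L n (hz h)) -
        ∑ l ∈ Finset.Ico 1 L, Polynomial.eval 1
          (PowerSeries.trunc (n * (L - 1))
            ((PowerSeries.mk fun j => h l j) *
              ((P00 L n (hz h) : Polynomial ℂ) : PowerSeries ℂ))) =
      Matrix.det (Matrix.of fun r c : Fin (n * (L - 1) + 1) =>
        if (r : ℕ) = 0 then hz h 0 (((n * (L - 1) : ℕ) : ℤ) - ((c : ℕ) : ℤ))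
        else hz h (((r : ℕ) - 1) / n + 1)
          (((n * (L - 1) : ℕ) : ℤ) + (((((r : ℕ) - 1) % n : ℕ)) : ℤ) - ((c : ℕ) : ℤ))) :=
  eval_one_identity_zero_general L n h hcont
end
end
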